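/- Let s be a nonzero real number, b a real number, and let (a_jk) be a complex 3x3 invertible matrix satisfying: a13 = a23 = a31 = a32 = 0; a33 = |a11|^2 + b^2 a11 conj(a21) - s^2 |a21|^2; -s^2 a33 = |a12|^2 + b^2 a12 conj(a22) - s^2 |a22|^2; 0 = a12 conj(a11) + b^2 a12 conj(a21) - s^2 a22 conj(a21); 1 = |a11|^2 + s^2 |a21|^2; s^2 = |a12|^2 + s^2 |a22|^2; 0 = a11 conj(a12) + s^2 a21 conj(a22). Then |a33| = 1. -/

import Mathlib

open ComplexConjugate

/-- Compatibility equations (2.9)-(2.10) with rho = 0 force |a33| = 1 (Lemma 2.6). -/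
theorem stmt_4 (s b : ℝ) (hs : s ≠ 0) (a11 a12 a21 a22 a33 : ℂ)
    (hinv : IsUnit (Matrix.det !![a11, a12, 0; a21, a22, 0; 0, 0, a33]))
    (h1 : a33 = ((‖a11‖ ^ 2 : ℝ) : ℂ) + (b : ℂ) ^ 2 * a11 * conj a21 -
      (s : ℂ) ^ 2 * ((‖a21‖ ^ 2 : ℝ) : ℂ))
    (h2 : -(s : ℂ) ^ 2 * a33 = ((‖a12‖ ^ 2 : ℝ) : ℂ) + (b : ℂ) ^ 2 * a12 * conj a22 -
      (s : ℂ) ^ 2 * ((‖a22‖ ^ 2 : ℝ) : ℂ))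
    (h3 : a12 * conj a11 + (b : ℂ) ^ 2 * a12 * conj a21 - (s : ℂ) ^ 2 * a22 * conj a21 = 0)
    (h4 : ‖a11‖ ^ 2 + s ^ 2 * ‖a21‖ ^ 2 = 1)
    (h5 : s ^ 2 = ‖a12‖ ^ 2 + s ^ 2 * ‖a22‖ ^ 2)
    (h6 : a11 * conj a12 + (s : ℂ) ^ 2 * a21 * conj a22 = 0) :
    ‖a33‖ = 1 := by
  have e : ∀ z : ℂ, ((‖z‖ ^ 2 : ℝ) : ℂ) = z * conj z := fun z => by
    rw [Complex.sq_norm]; exact (Complex.mul_conj z).symm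
  rw [e, e] at h1
  rw [e, e] at h2
  have h4c : a11 * conj a11 + (s : ℂ) ^ 2 * (a21 * conj a21) = 1 := by
    have : a11 * conj a11 + (s : ℂ) ^ 2 * (a21 * conj a21)
        = ((‖a11‖ ^ 2 + s ^ 2 * ‖a21‖ ^ 2 : ℝ) : ℂ) := by
      rw [Complex.ofReal_add, e, Complex.ofReal_mul, e, Complex.ofReal_pow]
    rw [this, h4]; norm_num
  have h5c : (s : ℂ) ^ 2 = a12 * conj a12 + (s : ℂ) ^ 2 * (a22 * conj a22) := by
    have : a12 * conj a12 + (s : ℂ) ^ 2 * (a22 * conj a22)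
        = ((‖a12‖ ^ 2 + s ^ 2 * ‖a22‖ ^ 2 : ℝ) : ℂ) := by
      rw [Complex.ofReal_add, e, Complex.ofReal_mul, e, Complex.ofReal_pow]
    rw [this, ← h5]
    exact (Complex.ofReal_pow s 2).symm
  have h6c : conj a11 * a12 + (s : ℂ) ^ 2 * conj a21 * a22 = 0 := by
    have := congrArg conj h6
    simpa [map_add, map_mul, mul_comm] using this
  have key : (s : ℂ) ^ 2 * a33 ^ 2 = (s : ℂ) ^ 2 := by
    linear_combination
      (-(a12 * conj a12 + (b : ℂ) ^ 2 * a12 * conj a22 -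
          (s : ℂ) ^ 2 * (a22 * conj a22))) * h1 +
      (-a33) * h2 +
      (-(a11 * conj a12 + (b : ℂ) ^ 2 * a11 * conj a22 -
          (s : ℂ) ^ 2 * a21 * conj a22)) * h3 +
      (a12 * conj a12 + (s : ℂ) ^ 2 * (a22 * conj a22)) * h4c +
      (-1 : ℂ) * h5c +
      (-(conj a11 * a12 + (s : ℂ) ^ 2 * conj a21 * a22)) * h6
  have hsc : (s : ℂ) ^ 2 ≠ 0 := by
    simpa using pow_ne_zero 2 (Complex.ofReal_ne_zero.mpr hs)
  have hsq : a33 ^ 2 = 1 := mul_left_cancel₀ hsc (by rw [key, mul_one])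
  have hfac : (a33 - 1) * (a33 + 1) = 0 := by linear_combination hsq
  rcases mul_eq_zero.mp hfac with h | h
  · have : a33 = 1 := by linear_combination h
    simp [this]
  · have : a33 = -1 := by linear_combination h
    simp [this]
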